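/- Let φ(λ) = ∫₀^∞ (1 - e^{-λt}) μ(dt) with ∫ (1 ∧ t) μ(dt) < ∞ and H(λ) = φ(λ) - λφ'(λ). If H satisfies the lower scaling condition L_a(γ, C_L) (i.e. H(λx) ≥ C_L x^γ H(λ) for all λ > a, x ≥ 1), then φ satisfies L_a(γ, C_L) as well. -/

import Mathlib

/-!
With `g(u) = 1 - e^{-u} - u e^{-u} ≥ 0` (`hKernel`) one has `H(s) = ∫ g(st) μ(dt)`, and
`g(st)/s²` is the `s`-derivative of `-(1 - e^{-st})/s`, so `(1 - e^{-λt})/λ = ∫_λ^∞ g(st)/s² ds`.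
Integrating in `μ(dt)` and swapping the integrals gives `φ(λ) = λ ∫_λ^∞ H(s)/s² ds`. The
substitution `s = ux` turns this into `φ(λx) = λ ∫_λ^∞ H(ux)/u² du`, and `H(ux) ≥ C_L x^γ H(u)`
for `u > λ` finishes.
-/

open MeasureTheory Real Set Filter Topology

noncomputable def hKernel (u : ℝ) : ℝ := 1 - exp (-u) - u * exp (-u)

@[fun_prop]
lemma continuous_hKernel : Continuous hKernel := by
  unfold hKernel; fun_prop

lemma hKernel_nonneg (u : ℝ) : 0 ≤ hKernel u := by
  have h : (u + 1) * exp (-u) ≤ 1 := by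
    simpa [← exp_add] using mul_le_mul_of_nonneg_right (add_one_le_exp u) (exp_pos (-u)).le
  unfold hKernel; linarith

lemma one_sub_exp_neg_le_min (u : ℝ) : 1 - exp (-u) ≤ min 1 u :=
  le_min (by linarith [exp_pos (-u)]) (by linarith [add_one_le_exp (-u)])

lemma min_one_mul_le (s : ℝ) {t : ℝ} (ht : 0 ≤ t) :
    min 1 (s * t) ≤ max 1 s * min 1 t := by
  rcases le_total t 1 with h | h
  · rw [min_eq_right h]
    exact (min_le_right _ _).trans (mul_le_mul_of_nonneg_right (le_max_right 1 s) ht)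
  · rw [min_eq_left h, mul_one]
    exact (min_le_left _ _).trans (le_max_left 1 s)

lemma hasDerivAt_neg_one_sub_exp_neg_mul_div (t : ℝ) {s : ℝ} (hs : s ≠ 0) :
    HasDerivAt (fun s => -((1 - exp (-(s * t))) / s)) (hKernel (s * t) / s ^ 2) s := by
  have hlin : HasDerivAt (fun s => -(s * t)) (-t) s := by
    simpa using ((hasDerivAt_id s).mul_const t).fun_neg
  refine ((hlin.exp.const_sub 1).fun_div (hasDerivAt_id s) hs).fun_neg.congr_deriv ?_
  simp only [hKernel, id]
  field_simp
  ring

lemma tendsto_neg_one_sub_exp_neg_mul_div {t : ℝ} (ht : 0 < t) :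
    Tendsto (fun s => -((1 - exp (-(s * t))) / s)) atTop (𝓝 0) := by
  have hexp : Tendsto (fun s => exp (-(s * t))) atTop (𝓝 0) :=
    tendsto_exp_atBot.comp (tendsto_neg_atTop_atBot.comp (tendsto_id.atTop_mul_const ht))
  simpa using ((tendsto_const_nhds.sub hexp).div_atTop tendsto_id).neg

lemma integrableOn_hKernel_mul_div_sq {t l : ℝ} (ht : 0 < t) (hl : 0 < l) :
    IntegrableOn (fun s => hKernel (s * t) / s ^ 2) (Ioi l) :=
  integrableOn_Ioi_deriv_of_nonneg'
    (fun _ hs => hasDerivAt_neg_one_sub_exp_neg_mul_div t (hl.trans_le hs).ne')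
    (fun _ _ => div_nonneg (hKernel_nonneg _) (sq_nonneg _))
    (tendsto_neg_one_sub_exp_neg_mul_div ht)

lemma integral_hKernel_mul_div_sq {t l : ℝ} (ht : 0 < t) (hl : 0 < l) :
    ∫ s in Ioi l, hKernel (s * t) / s ^ 2 = (1 - exp (-(l * t))) / l := by
  rw [integral_Ioi_of_hasDerivAt_of_nonneg'
    (fun _ hs => hasDerivAt_neg_one_sub_exp_neg_mul_div t (hl.trans_le hs).ne')
    (fun _ _ => div_nonneg (hKernel_nonneg _) (sq_nonneg _))
    (tendsto_neg_one_sub_exp_neg_mul_div ht)]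
  ring

lemma sigmaFinite_of_integrable_of_ae_pos {α : Type*} [MeasurableSpace α] {μ : Measure α}
    {f : α → ℝ} (hf : Integrable f μ) (hpos : ∀ᵐ x ∂μ, 0 < f x) : SigmaFinite μ := by
  refine Measure.sigmaFinite_of_countable (S := insert {x | f x ≤ 0}
    (range fun n : ℕ => {x | 1 / (n + 1 : ℝ) ≤ f x})) ((countable_range _).insert _) ?_ ?_
  · rintro s (rfl | ⟨n, rfl⟩)
    · simp only [ae_iff, not_lt] at hpos
      simp [hpos]
    · exact hf.measure_ge_lt_top (by positivity)
  · refine eq_univ_of_forall fun x => ?_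
    rcases le_or_gt (f x) 0 with h | h
    · exact ⟨_, mem_insert _ _, h⟩
    · obtain ⟨n, hn⟩ := exists_nat_one_div_lt h
      exact ⟨_, mem_insert_of_mem _ ⟨n, rfl⟩, hn.le⟩

lemma le_mul_setIntegral_Ioi_div_sq {F : ℝ → ℝ} {l x c : ℝ} (hl : 0 < l) (hx : 0 < x)
    (hF : IntegrableOn (fun s => F s / s ^ 2) (Ioi l))
    (hFx : IntegrableOn (fun s => F s / s ^ 2) (Ioi (l * x)))
    (hle : ∀ u > l, c * F u ≤ F (u * x)) :
    c * (l * ∫ s in Ioi l, F s / s ^ 2) ≤ l * x * ∫ s in Ioi (l * x), F s / s ^ 2 := by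
  have hrescale : ∀ u, x ^ 2 * (F (u * x) / (u * x) ^ 2) = F (u * x) / u ^ 2 := fun u => by
    rw [mul_pow, ← div_div, mul_div_cancel₀ _ (pow_ne_zero 2 hx.ne')]
  have hint : IntegrableOn (fun u => F (u * x) / u ^ 2) (Ioi l) := by
    simp_rw [← hrescale]
    exact ((integrableOn_Ioi_comp_mul_right_iff (fun s => F s / s ^ 2) l hx).mpr hFx).const_mul _
  have hmono : ∫ u in Ioi l, c * (F u / u ^ 2) ≤ ∫ u in Ioi l, F (u * x) / u ^ 2 :=
    setIntegral_mono_on (hF.const_mul c) hint measurableSet_Ioi fun u hu => by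
      rw [← mul_div_assoc]
      exact div_le_div_of_nonneg_right (hle u hu) (sq_nonneg u)
  calc c * (l * ∫ s in Ioi l, F s / s ^ 2) = l * ∫ u in Ioi l, c * (F u / u ^ 2) := by
        rw [integral_const_mul]; ring
    _ ≤ l * ∫ u in Ioi l, F (u * x) / u ^ 2 := by gcongr
    _ = l * x * ∫ s in Ioi (l * x), F s / s ^ 2 := by
        rw [← integral_comp_mul_right_Ioi' (fun s => F s / s ^ 2) l hx, smul_eq_mul]
        simp_rw [← hrescale]
        rw [integral_const_mul]
        ring

section LevyMeasure

variable {μ : Measure ℝ}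

lemma sigmaFinite_restrict_Ioi_of_integrableOn_min
    (hμ : IntegrableOn (fun t => min 1 t) (Ioi 0) μ) : SigmaFinite (μ.restrict (Ioi 0)) :=
  sigmaFinite_of_integrable_of_ae_pos hμ <| (ae_restrict_mem measurableSet_Ioi).mono
    fun _ ht => lt_min one_pos ht

lemma integrableOn_one_sub_exp_neg_mul (hμ : IntegrableOn (fun t => min 1 t) (Ioi 0) μ)
    {s : ℝ} (hs : 0 ≤ s) : IntegrableOn (fun t => 1 - exp (-(s * t))) (Ioi 0) μ := by
  refine (hμ.const_mul (max 1 s)).mono' (by fun_prop : Continuous _).aestronglyMeasurable ?_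
  filter_upwards [ae_restrict_mem measurableSet_Ioi] with t (ht : 0 < t)
  have hexp : exp (-(s * t)) ≤ 1 := exp_le_one_iff.mpr (by nlinarith)
  rw [Real.norm_of_nonneg (sub_nonneg.mpr hexp)]
  exact (one_sub_exp_neg_le_min _).trans (min_one_mul_le s ht.le)

lemma integrableOn_mul_exp_neg_mul (hμ : IntegrableOn (fun t => min 1 t) (Ioi 0) μ)
    {s : ℝ} (hs : 0 < s) : IntegrableOn (fun t => t * exp (-(s * t))) (Ioi 0) μ := by
  have h : IntegrableOn (fun t => s * t * exp (-(s * t))) (Ioi 0) μ := by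
    refine (integrableOn_one_sub_exp_neg_mul hμ hs.le).mono'
      (by fun_prop : Continuous _).aestronglyMeasurable ?_
    filter_upwards [ae_restrict_mem measurableSet_Ioi] with t (ht : 0 < t)
    rw [Real.norm_of_nonneg (by positivity)]
    have hK := hKernel_nonneg (s * t)
    rw [hKernel] at hK
    linarith
  refine (h.const_mul s⁻¹).congr (ae_of_all _ fun t => ?_)
  simp only [← mul_assoc, inv_mul_cancel₀ hs.ne', one_mul]

lemma integral_hKernel_mul (hμ : IntegrableOn (fun t => min 1 t) (Ioi 0) μ) {s : ℝ}
    (hs : 0 < s) :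
    ∫ t in Ioi 0, hKernel (s * t) ∂μ =
      ∫ t in Ioi 0, (1 - exp (-(s * t))) ∂μ - s * ∫ t in Ioi 0, t * exp (-(s * t)) ∂μ := by
  rw [← integral_const_mul, ← integral_sub (integrableOn_one_sub_exp_neg_mul hμ hs.le)
    ((integrableOn_mul_exp_neg_mul hμ hs).const_mul s)]
  congr 1 with t
  simp only [hKernel]
  ring

lemma integrable_hKernel_mul_div_sq_prod (hμ : IntegrableOn (fun t => min 1 t) (Ioi 0) μ)
    {l : ℝ} (hl : 0 < l) :
    Integrable (fun p : ℝ × ℝ => hKernel (p.1 * p.2) / p.1 ^ 2)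
      ((volume.restrict (Ioi l)).prod (μ.restrict (Ioi 0))) := by
  have := sigmaFinite_restrict_Ioi_of_integrableOn_min hμ
  rw [integrable_prod_iff' (by fun_prop :
    Measurable fun p : ℝ × ℝ => hKernel (p.1 * p.2) / p.1 ^ 2).aestronglyMeasurable]
  constructor
  · filter_upwards [ae_restrict_mem measurableSet_Ioi] with t ht
    exact integrableOn_hKernel_mul_div_sq ht hl
  · refine ((integrableOn_one_sub_exp_neg_mul hμ hl.le).div_const l).congr ?_
    filter_upwards [ae_restrict_mem measurableSet_Ioi] with t ht
    simp only [Real.norm_of_nonneg (div_nonneg (hKernel_nonneg _) (sq_nonneg _))]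
    exact (integral_hKernel_mul_div_sq ht hl).symm

lemma integral_one_sub_exp_neg_mul_eq (hμ : IntegrableOn (fun t => min 1 t) (Ioi 0) μ)
    {l : ℝ} (hl : 0 < l) :
    ∫ t in Ioi 0, (1 - exp (-(l * t))) ∂μ =
      l * ∫ s in Ioi l, (∫ t in Ioi 0, hKernel (s * t) ∂μ) / s ^ 2 := by
  have := sigmaFinite_restrict_Ioi_of_integrableOn_min hμ
  have hswap := integral_integral_swap (f := fun s t => hKernel (s * t) / s ^ 2)
    (integrable_hKernel_mul_div_sq_prod hμ hl)
  simp only [integral_div] at hswap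
  rw [hswap, ← integral_const_mul]
  refine setIntegral_congr_fun measurableSet_Ioi fun t ht => ?_
  rw [integral_hKernel_mul_div_sq ht hl]
  field_simp

lemma integrableOn_integral_hKernel_mul_div_sq (hμ : IntegrableOn (fun t => min 1 t) (Ioi 0) μ)
    {l : ℝ} (hl : 0 < l) :
    IntegrableOn (fun s => (∫ t in Ioi 0, hKernel (s * t) ∂μ) / s ^ 2) (Ioi l) := by
  have := sigmaFinite_restrict_Ioi_of_integrableOn_min hμ
  have h := (integrable_hKernel_mul_div_sq_prod hμ hl).integral_prod_left
  simp only [integral_div] at h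
  exact h

end LevyMeasure

theorem phi_inherits_lower_scaling_general
    (μ : Measure ℝ) (hμ : IntegrableOn (fun t => min 1 t) (Ioi 0) μ)
    (φ φ' H : ℝ → ℝ)
    (hφ : ∀ lam : ℝ, φ lam = ∫ t in Ioi (0:ℝ), (1 - Real.exp (-(lam * t))) ∂μ)
    (hφ' : ∀ lam : ℝ, φ' lam = ∫ t in Ioi (0:ℝ), t * Real.exp (-(lam * t)) ∂μ)
    (hH : ∀ lam : ℝ, H lam = φ lam - lam * φ' lam)
    (a γ C_L : ℝ) (ha : 0 ≤ a)
    (hLH : ∀ lam > a, ∀ x ≥ (1:ℝ), C_L * x ^ γ * H lam ≤ H (lam * x)) :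
    ∀ lam > a, ∀ x ≥ (1:ℝ), C_L * x ^ γ * φ lam ≤ φ (lam * x) := by
  intro lam hlam x hx
  have hl : 0 < lam := ha.trans_lt hlam
  have hx0 : 0 < x := one_pos.trans_le hx
  have hlx : 0 < lam * x := mul_pos hl hx0
  have hH_eq : ∀ s > 0, H s = ∫ t in Ioi 0, hKernel (s * t) ∂μ := fun s hs => by
    rw [hH, hφ, hφ', integral_hKernel_mul hμ hs]
  rw [hφ, hφ, integral_one_sub_exp_neg_mul_eq hμ hl, integral_one_sub_exp_neg_mul_eq hμ hlx]
  refine le_mul_setIntegral_Ioi_div_sq hl hx0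
    (integrableOn_integral_hKernel_mul_div_sq hμ hl)
    (integrableOn_integral_hKernel_mul_div_sq hμ hlx) fun u hu => ?_
  have hu0 : 0 < u := hl.trans hu
  rw [← hH_eq u hu0, ← hH_eq (u * x) (mul_pos hu0 hx0)]
  exact hLH u (hlam.trans hu) x hx

theorem phi_inherits_lower_scaling
    (μ : Measure ℝ) (hμ : IntegrableOn (fun t => min 1 t) (Ioi 0) μ)
    (φ φ' H : ℝ → ℝ)
    (hφ : ∀ lam : ℝ, φ lam = ∫ t in Ioi (0:ℝ), (1 - Real.exp (-(lam * t))) ∂μ)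
    (hφ' : ∀ lam : ℝ, φ' lam = ∫ t in Ioi (0:ℝ), t * Real.exp (-(lam * t)) ∂μ)
    (hH : ∀ lam : ℝ, H lam = φ lam - lam * φ' lam)
    (a γ C_L : ℝ) (ha : 0 ≤ a) (hγ : 0 < γ) (hCL : C_L ∈ Ioc (0:ℝ) 1)
    (hLH : ∀ lam > a, ∀ x ≥ (1:ℝ), C_L * x ^ γ * H lam ≤ H (lam * x)) :
    ∀ lam > a, ∀ x ≥ (1:ℝ), C_L * x ^ γ * φ lam ≤ φ (lam * x) :=
  phi_inherits_lower_scaling_general μ hμ φ φ' H hφ hφ' hH a γ C_L ha hLH
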